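/- (Pointwise Operator Equivalence, core of the Operator Equivalence Theorem.) Let n ≥ 1, μ ∈ ℝⁿ, Σ a symmetric positive definite real n×n matrix, and let p : ℝⁿ → ℝ be the associated Gaussian density. Let h : ℝⁿ → ℝⁿ be continuously differentiable and M : ℝⁿ → ℝ^{n×n} twice continuously differentiable with M(x) symmetric for every x. Then for every x ∈ ℝⁿ, the adjoint expression (A*p)(x) := −Σᵢ ∂/∂xᵢ[p(x) hᵢ(x)] + (1/2) Σᵢⱼ ∂²/∂xᵢ∂xⱼ[p(x) Mᵢⱼ(x)] equals p(x) · c(x), where the 𝒴-coefficient c(x) is defined by c(x) = (Σ⁻¹(x − μ))ᵀ h(x) − Σᵢ ∂hᵢ/∂xᵢ(x) + (1/2) Σᵢⱼ [ (−Σ⁻¹ + Σ⁻¹ (x − μ)(x − μ)ᵀ (Σ⁻¹)ᵀ)ᵢⱼ · Mᵢⱼ(x) + ∂²Mᵢⱼ/∂xᵢ∂xⱼ(x) ] − Σᵢⱼ ∂Mᵢⱼ/∂xᵢ(x) · (Σ⁻¹(x − μ))ⱼ. -/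

import Mathlib

/-! Writing `v = S⁻¹ (x - μ)`, the Gaussian satisfies `∂ᵢ p = -vᵢ p`, so differentiating `p · f`
just replaces `f` by `∂ᵢ f - vᵢ f` under the factor `p`. Applying this once to `p hᵢ` and twice
to `p Mᵢⱼ` (with `∂ᵢ vⱼ = S⁻¹ⱼᵢ`) writes the adjoint expression as `p` times a polynomial in
`v`, `h`, `M` and their derivatives. It is the `𝒴`-coefficient once the symmetry of `S⁻¹` and
of `M` is used to identify `S⁻¹ⱼᵢ` with `S⁻¹ᵢⱼ` and the mixed term `vᵢ ∂ⱼ Mᵢⱼ` with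
`vⱼ ∂ᵢ Mᵢⱼ`. -/

open Matrix

/-- Partial derivative of `f : ℝⁿ → ℝ` in the `i`-th coordinate direction. -/
noncomputable def pd {n : ℕ} (i : Fin n) (f : (Fin n → ℝ) → ℝ) (x : Fin n → ℝ) : ℝ :=
  fderiv ℝ f x (Pi.single i 1)

/-- Gaussian density with mean `μ` and covariance matrix `S`. -/
noncomputable def gaussianPdf {n : ℕ} (μ : Fin n → ℝ) (S : Matrix (Fin n) (Fin n) ℝ)
    (x : Fin n → ℝ) : ℝ :=
  (2 * Real.pi) ^ (-(n : ℝ) / 2) * S.det ^ (-(1 : ℝ) / 2) *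
    Real.exp (-(1 / 2) * ((x - μ) ⬝ᵥ S⁻¹.mulVec (x - μ)))

/-- The scalar `𝒴`-coefficient built from drift `h`, diffusion matrix `M`, and the
Gaussian parameters `μ`, `S`. -/
noncomputable def yCoeff {n : ℕ} (μ : Fin n → ℝ) (S : Matrix (Fin n) (Fin n) ℝ)
    (h : (Fin n → ℝ) → Fin n → ℝ) (M : (Fin n → ℝ) → Matrix (Fin n) (Fin n) ℝ)
    (x : Fin n → ℝ) : ℝ :=
  (S⁻¹.mulVec (x - μ)) ⬝ᵥ h x - (∑ i, pd i (fun y => h y i) x)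
    + (1 / 2) * ∑ i, ∑ j,
        ((-S⁻¹ + S⁻¹ * vecMulVec (x - μ) (x - μ) * (S⁻¹)ᵀ) i j * M x i j
          + pd i (fun y => pd j (fun z => M z i j) y) x)
    - ∑ i, ∑ j, pd i (fun y => M y i j) x * (S⁻¹.mulVec (x - μ)) j

section PartialDerivative

variable {n : ℕ} {i : Fin n} {f g : (Fin n → ℝ) → ℝ} {x : Fin n → ℝ}

theorem HasFDerivAt.pd_eq {f' : (Fin n → ℝ) →L[ℝ] ℝ} (hf : HasFDerivAt f f' x) :
    pd i f x = f' (Pi.single i 1) := by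
  rw [pd, hf.fderiv]

theorem pd_mul (hf : DifferentiableAt ℝ f x) (hg : DifferentiableAt ℝ g x) :
    pd i (fun y => f y * g y) x = pd i f x * g x + f x * pd i g x := by
  simp only [pd, fderiv_fun_mul hf hg, _root_.add_apply,
    _root_.smul_apply, smul_eq_mul]
  ring

theorem pd_sub (hf : DifferentiableAt ℝ f x) (hg : DifferentiableAt ℝ g x) :
    pd i (fun y => f y - g y) x = pd i f x - pd i g x := by
  simp only [pd, fderiv_fun_sub hf hg, _root_.sub_apply]

theorem pd_sum {ι : Type*} (s : Finset ι) {F : ι → (Fin n → ℝ) → ℝ}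
    (hF : ∀ k ∈ s, DifferentiableAt ℝ (F k) x) :
    pd i (fun y => ∑ k ∈ s, F k y) x = ∑ k ∈ s, pd i (F k) x := by
  simp only [pd, fderiv_fun_sum hF, _root_.sum_apply]

theorem ContDiff.pd {k m : WithTop ℕ∞} (hf : ContDiff ℝ k f) (hm : m + 1 ≤ k) (j : Fin n) :
    ContDiff ℝ m (fun y => pd j f y) :=
  (hf.fderiv_right hm).clm_apply contDiff_const

end PartialDerivative

section AffineAndQuadratic

variable {m n : ℕ} (μ x : Fin n → ℝ)

theorem hasFDerivAt_mulVec_sub_apply (A : Matrix (Fin m) (Fin n) ℝ) (j : Fin m) :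
    HasFDerivAt (fun y => (A *ᵥ (y - μ)) j)
      ((ContinuousLinearMap.proj j).comp (LinearMap.toContinuousLinearMap A.mulVecLin)) x := by
  simpa [mulVec_sub] using
    ((ContinuousLinearMap.proj j).comp
      (LinearMap.toContinuousLinearMap A.mulVecLin)).hasFDerivAt.sub_const ((A *ᵥ μ) j)

theorem pd_mulVec_sub_apply (A : Matrix (Fin m) (Fin n) ℝ) (i : Fin n) (j : Fin m) :
    pd i (fun y => (A *ᵥ (y - μ)) j) x = A j i := by
  simp [(hasFDerivAt_mulVec_sub_apply μ x A j).pd_eq]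

theorem pd_sub_apply (i k : Fin n) :
    pd i (fun y => (y - μ) k) x = (1 : Matrix (Fin n) (Fin n) ℝ) k i := by
  simpa using pd_mulVec_sub_apply μ x (1 : Matrix (Fin n) (Fin n) ℝ) i k

theorem pd_dotProduct_mulVec_sub (A : Matrix (Fin n) (Fin n) ℝ) (i : Fin n) :
    pd i (fun y => (y - μ) ⬝ᵥ A *ᵥ (y - μ)) x = (A *ᵥ (x - μ)) i + (Aᵀ *ᵥ (x - μ)) i := by
  have hdiff : ∀ k, DifferentiableAt ℝ (fun y => (A *ᵥ (y - μ)) k) x := fun k =>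
    (hasFDerivAt_mulVec_sub_apply μ x A k).differentiableAt
  show pd i (fun y => ∑ k, (y - μ) k * (A *ᵥ (y - μ)) k) x = _
  rw [pd_sum Finset.univ (F := fun (k : Fin n) (y : Fin n → ℝ) => (y - μ) k * (A *ᵥ (y - μ)) k)
    fun k _ => (by fun_prop : DifferentiableAt ℝ (fun y => (y - μ) k) x).mul (hdiff k)]
  have hterm : ∀ k, pd i (fun y => (y - μ) k * (A *ᵥ (y - μ)) k) x
      = (A *ᵥ (x - μ)) k * (1 : Matrix (Fin n) (Fin n) ℝ) k i + (x - μ) k * A k i := fun k => by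
    rw [pd_mul (by fun_prop) (hdiff k), pd_sub_apply, pd_mulVec_sub_apply, mul_comm]
  simp only [hterm, Finset.sum_add_distrib]
  change ((A *ᵥ (x - μ)) ᵥ* 1) i + ((x - μ) ᵥ* A) i = _
  rw [vecMul_one, mulVec_transpose]

end AffineAndQuadratic

section Gaussian

variable {n : ℕ} {μ : Fin n → ℝ} {S : Matrix (Fin n) (Fin n) ℝ} {x : Fin n → ℝ}

theorem differentiable_gaussianPdf : Differentiable ℝ (gaussianPdf μ S) := by
  unfold gaussianPdf
  simp only [dotProduct, mulVec]
  fun_prop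

theorem pd_gaussianPdf (hS : S.IsSymm) (i : Fin n) :
    pd i (gaussianPdf μ S) x = -(S⁻¹ *ᵥ (x - μ)) i * gaussianPdf μ S x := by
  have hq : DifferentiableAt ℝ (fun y => (y - μ) ⬝ᵥ S⁻¹ *ᵥ (y - μ)) x := by
    simp only [dotProduct, mulVec]
    fun_prop
  have hp : HasFDerivAt (gaussianPdf μ S) _ x :=
    ((hq.hasFDerivAt.const_mul (-(1 / 2 : ℝ))).exp).const_mul
      ((2 * Real.pi) ^ (-(n : ℝ) / 2) * S.det ^ (-(1 : ℝ) / 2))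
  have hq' : fderiv ℝ (fun y => (y - μ) ⬝ᵥ S⁻¹ *ᵥ (y - μ)) x (Pi.single i 1)
      = (S⁻¹ *ᵥ (x - μ)) i + (S⁻¹ᵀ *ᵥ (x - μ)) i :=
    pd_dotProduct_mulVec_sub μ x S⁻¹ i
  rw [hp.pd_eq]
  simp only [_root_.smul_apply, smul_eq_mul, hq', hS.inv.eq]
  unfold gaussianPdf
  ring

theorem pd_gaussianPdf_mul (hS : S.IsSymm) {i : Fin n} {f : (Fin n → ℝ) → ℝ}
    (hf : DifferentiableAt ℝ f x) :
    pd i (fun y => gaussianPdf μ S y * f y) x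
      = gaussianPdf μ S x * (pd i f x - (S⁻¹ *ᵥ (x - μ)) i * f x) := by
  rw [pd_mul differentiable_gaussianPdf.differentiableAt hf, pd_gaussianPdf hS]
  ring

theorem pd_pd_gaussianPdf_mul (hS : S.IsSymm) (i j : Fin n) {f : (Fin n → ℝ) → ℝ}
    (hf : ContDiff ℝ 2 f) :
    pd i (fun y => pd j (fun z => gaussianPdf μ S z * f z) y) x
      = gaussianPdf μ S x * (pd i (fun y => pd j f y) x - S⁻¹ j i * f x
          - (S⁻¹ *ᵥ (x - μ)) j * pd i f x
          - (S⁻¹ *ᵥ (x - μ)) i * (pd j f x - (S⁻¹ *ᵥ (x - μ)) j * f x)) := by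
  have hf₁ : Differentiable ℝ f := hf.differentiable (by norm_num)
  have hpdf : DifferentiableAt ℝ (fun y => pd j f y) x :=
    ((hf.pd (m := 1) (by norm_num) j).differentiable (by norm_num)) x
  have hv : DifferentiableAt ℝ (fun y => (S⁻¹ *ᵥ (y - μ)) j) x :=
    (hasFDerivAt_mulVec_sub_apply μ x S⁻¹ j).differentiableAt
  have hvf : DifferentiableAt ℝ (fun y => (S⁻¹ *ᵥ (y - μ)) j * f y) x := hv.mul (hf₁ x)
  have hg : DifferentiableAt ℝ (fun y => pd j f y - (S⁻¹ *ᵥ (y - μ)) j * f y) x := hpdf.sub hvf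
  simp only [pd_gaussianPdf_mul hS (hf₁ _)]
  rw [pd_gaussianPdf_mul hS hg, pd_sub hpdf hvf,
    pd_mul hv (hf₁ x), pd_mulVec_sub_apply]
  ring

end Gaussian

theorem mul_vecMulVec_mul_transpose {R : Type*} [CommRing R] {m n : Type*} [Fintype n]
    (A : Matrix m n R) (u : n → R) : A * vecMulVec u u * Aᵀ = vecMulVec (A *ᵥ u) (A *ᵥ u) := by
  rw [mul_vecMulVec, vecMulVec_mul, vecMul_transpose]

theorem yCoeff_eq {n : ℕ} (μ : Fin n → ℝ) {S : Matrix (Fin n) (Fin n) ℝ} (hS : S.IsSymm)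
    (h : (Fin n → ℝ) → Fin n → ℝ) {M : (Fin n → ℝ) → Matrix (Fin n) (Fin n) ℝ}
    (hM : ∀ x, (M x).IsSymm) (x : Fin n → ℝ) :
    yCoeff μ S h M x
      = -∑ i, (pd i (fun y => h y i) x - (S⁻¹ *ᵥ (x - μ)) i * h x i)
        + (1 / 2) * ∑ i, ∑ j,
          (pd i (fun y => pd j (fun z => M z i j) y) x - S⁻¹ j i * M x i j
            - (S⁻¹ *ᵥ (x - μ)) j * pd i (fun z => M z i j) x
            - (S⁻¹ *ᵥ (x - μ)) i * (pd j (fun z => M z i j) x - (S⁻¹ *ᵥ (x - μ)) j * M x i j)) := by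
  rw [yCoeff]
  set v := S⁻¹ *ᵥ (x - μ)
  have hcoeff : -S⁻¹ + S⁻¹ * vecMulVec (x - μ) (x - μ) * S⁻¹ᵀ = vecMulVec v v - S⁻¹ := by
    rw [mul_vecMulVec_mul_transpose]
    abel
  have hterm : ∀ i j,
      pd i (fun y => pd j (fun z => M z i j) y) x - S⁻¹ j i * M x i j
          - v j * pd i (fun z => M z i j) x - v i * (pd j (fun z => M z i j) x - v j * M x i j)
        = ((-S⁻¹ + S⁻¹ * vecMulVec (x - μ) (x - μ) * S⁻¹ᵀ) i j * M x i j
            + pd i (fun y => pd j (fun z => M z i j) y) x)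
          - (v j * pd i (fun z => M z i j) x + v i * pd j (fun z => M z i j) x) := fun i j => by
    rw [hcoeff, Matrix.sub_apply, vecMulVec_apply, hS.inv.apply]
    ring
  have hswap : ∑ i, ∑ j, v i * pd j (fun z => M z i j) x
      = ∑ i, ∑ j, v j * pd i (fun z => M z i j) x := by
    rw [Finset.sum_comm]
    refine Finset.sum_congr rfl fun i _ => Finset.sum_congr rfl fun j _ => ?_
    simp only [(hM _).apply i j]
  have hcomm : ∑ i, ∑ j, pd i (fun y => M y i j) x * v j
      = ∑ i, ∑ j, v j * pd i (fun z => M z i j) x := by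
    simp only [mul_comm]
  simp only [hterm, hswap, hcomm, dotProduct, Finset.sum_sub_distrib,
    Finset.sum_add_distrib]
  ring

theorem adjoint_eq_gaussianPdf_mul_yCoeff_general (n : ℕ) (μ : Fin n → ℝ)
    (S : Matrix (Fin n) (Fin n) ℝ) (hSsymm : S.IsSymm)
    (h : (Fin n → ℝ) → Fin n → ℝ) (hh : ∀ i, ContDiff ℝ 1 fun y => h y i)
    (M : (Fin n → ℝ) → Matrix (Fin n) (Fin n) ℝ)
    (hM : ∀ i j, ContDiff ℝ 2 fun y => M y i j)
    (hMsymm : ∀ x, (M x).IsSymm) (x : Fin n → ℝ) :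
    (-∑ i, pd i (fun y => gaussianPdf μ S y * h y i) x)
      + (1 / 2) * ∑ i, ∑ j,
          pd i (fun y => pd j (fun z => gaussianPdf μ S z * M z i j) y) x
    = gaussianPdf μ S x * yCoeff μ S h M x := by
  simp only [pd_gaussianPdf_mul hSsymm ((hh _).differentiable one_ne_zero x),
    pd_pd_gaussianPdf_mul hSsymm _ _ (hM _ _), yCoeff_eq μ hSsymm h hMsymm x, ← Finset.mul_sum]
  ring

/-- Pointwise operator equivalence: for the Gaussian density `p`, the adjoint expression
`(A*p)(x)` equals `p(x) · c(x)` with `c` the explicit `𝒴`-coefficient. -/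
theorem adjoint_eq_gaussianPdf_mul_yCoeff (n : ℕ) (hn : 1 ≤ n) (μ : Fin n → ℝ)
    (S : Matrix (Fin n) (Fin n) ℝ) (hS : S.PosDef) (hSsymm : S.IsSymm)
    (h : (Fin n → ℝ) → Fin n → ℝ) (hh : ∀ i, ContDiff ℝ 1 fun y => h y i)
    (M : (Fin n → ℝ) → Matrix (Fin n) (Fin n) ℝ)
    (hM : ∀ i j, ContDiff ℝ 2 fun y => M y i j)
    (hMsymm : ∀ x, (M x).IsSymm) (x : Fin n → ℝ) :
    (-∑ i, pd i (fun y => gaussianPdf μ S y * h y i) x)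
      + (1 / 2) * ∑ i, ∑ j,
          pd i (fun y => pd j (fun z => gaussianPdf μ S z * M z i j) y) x
    = gaussianPdf μ S x * yCoeff μ S h M x :=
  adjoint_eq_gaussianPdf_mul_yCoeff_general n μ S hSsymm h hh M hM hMsymm x
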